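/- Let Δ be a countable discrete group, let f ∈ ℤΔ be invertible in ℓ¹(Δ,ℝ) (equivalently, the principal algebraic Δ-action α_f is expansive), and let Λ be a subgroup of Δ of finite index n = [Δ:Λ]. Let Fix_Λ(α_f) = { t ∈ X_f : t_{λ⁻¹γ} = t_γ for all λ ∈ Λ and γ ∈ Δ } be the set of Λ-fixed points of α_f, and let V be the real vector space of functions w : Δ → ℝ that are constant on every right coset Λγ (so dim V = n), which is mapped to itself by the linear operator ρ_f defined by ρ_f(w)(θ) = Σ_{δ∈Δ} w(θδ)·f(δ). Then Fix_Λ(α_f) is finite and its cardinality equals |det(ρ_f|_V)|, the absolute value of the determinant of the restriction of ρ_f to V. -/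

import Mathlib

open MeasureTheory Filter



/-- The additive circle `ℝ/ℤ`. -/
abbrev T1 : Type := AddCircle (1 : ℝ)

variable {Δ : Type*} [Group Δ]

/-- For `f` in the integral group ring `ℤΔ`, the closed shift-invariant subgroup
`X_f = { t ∈ (ℝ/ℤ)^Δ : ∑_δ f(δ) • t(θδ) = 0 for all θ }`. -/
noncomputable def Xf (f : MonoidAlgebra ℤ Δ) : AddSubgroup (Δ → T1) where
  carrier := {t | ∀ θ : Δ, ∑ δ ∈ f.coeff.support, f.coeff δ • t (θ * δ) = 0}
  zero_mem' := by intro θ; simp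
  add_mem' := by
    intro a b ha hb θ
    simp only [Pi.add_apply, smul_add, Finset.sum_add_distrib]
    rw [ha θ, hb θ, add_zero]
  neg_mem' := by
    intro a ha θ
    simp only [Pi.neg_apply, smul_neg]
    rw [Finset.sum_neg_distrib, ha θ, neg_zero]

/-- The left shift action: `(γ · t)(δ) = t(γ⁻¹ δ)`. -/
def shift (γ : Δ) (t : Δ → T1) : Δ → T1 := fun δ => t (γ⁻¹ * δ)

theorem shift_mem {f : MonoidAlgebra ℤ Δ} (γ : Δ) {t : Δ → T1} (ht : t ∈ Xf f) :
    shift γ t ∈ Xf f := by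
  intro θ
  simpa [shift, mul_assoc] using ht (γ⁻¹ * θ)

/-- The principal algebraic `Δ`-action `α_f` on `X_f`. -/
def shiftX (f : MonoidAlgebra ℤ Δ) (γ : Δ) : ↥(Xf f) → ↥(Xf f) :=
  fun t => ⟨shift γ t.1, shift_mem γ t.2⟩

variable [DecidableEq Δ]

/-- `w : Δ → ℝ` is a two-sided `ℓ¹`-inverse of `f ∈ ℤΔ`. -/
def IsL1Inverse (f : MonoidAlgebra ℤ Δ) (w : Δ → ℝ) : Prop :=
  Summable (fun δ => |w δ|) ∧
  (∀ γ : Δ, ∑ δ ∈ f.coeff.support, (f.coeff δ : ℝ) * w (δ⁻¹ * γ) = if γ = 1 then 1 else 0) ∧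
  (∀ γ : Δ, ∑ δ ∈ f.coeff.support, w (γ * δ⁻¹) * (f.coeff δ : ℝ) = if γ = 1 then 1 else 0)

/-- `f ∈ ℤΔ` is invertible in `ℓ¹(Δ,ℝ)`. -/
def L1Invertible (f : MonoidAlgebra ℤ Δ) : Prop :=
  ∃ w : Δ → ℝ, IsL1Inverse f w

/-- The principal algebraic `Δ`-action `α_f` is expansive: there is a neighborhood `U`
of `0` in `X_f` with `⋂_γ γ·U = {0}`. -/
def ExpansiveAction (f : MonoidAlgebra ℤ Δ) : Prop :=
  ∃ U : Set ↥(Xf f), U ∈ nhds 0 ∧ (⋂ γ : Δ, shiftX f γ '' U) = {0}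

/-- `f* ∈ ℤΔ`, given by `f*(δ) = f(δ⁻¹)`. -/
def fstar (f : MonoidAlgebra ℤ Δ) : MonoidAlgebra ℤ Δ :=
  MonoidAlgebra.ofCoeff (Finsupp.equivMapDomain (Equiv.inv Δ) f.coeff)

/-- The action `α_f` is mixing with respect to `μ`. -/
def MixingAction (f : MonoidAlgebra ℤ Δ) (μ : Measure ↥(Xf f)) : Prop :=
  ∀ E F : Set ↥(Xf f), MeasurableSet E → MeasurableSet F →
    Tendsto (fun γ : Δ => μ ((shiftX f γ '' E) ∩ F)) cofinite (nhds (μ E * μ F))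

/-- The space of real-valued functions on `Δ` constant on every right coset `Λγ`. -/
def cosetV {Δ : Type*} [Group Δ] (Λ : Subgroup Δ) : Submodule ℝ (Δ → ℝ) where
  carrier := {w : Δ → ℝ | ∀ l ∈ Λ, ∀ γ : Δ, w (l * γ) = w γ}
  add_mem' := by
    intro a b ha hb l hl γ
    simp [ha l hl γ, hb l hl γ]
  zero_mem' := by intro l hl γ; rfl
  smul_mem' := by
    intro c a ha l hl γ
    simp [ha l hl γ]

/-- Right convolution `ρ_f` by `f* `, i.e. `ρ_f(w)(θ) = ∑_δ w(θδ)·f(δ)`, as a linear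
endomorphism of `Δ → ℝ`. -/
noncomputable def rhoLin {Δ : Type*} [Group Δ] (f : MonoidAlgebra ℤ Δ) :
    (Δ → ℝ) →ₗ[ℝ] (Δ → ℝ) where
  toFun w := fun θ : Δ => ∑ δ ∈ f.coeff.support, w (θ * δ) * (f.coeff δ : ℝ)
  map_add' a b := by
    funext θ
    simp [add_mul, Finset.sum_add_distrib]
  map_smul' c a := by
    funext θ
    simp [Finset.mul_sum, mul_assoc]

theorem rhoLin_mapsTo {Δ : Type*} [Group Δ] (f : MonoidAlgebra ℤ Δ) (Λ : Subgroup Δ) :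
    ∀ w ∈ cosetV Λ, rhoLin f w ∈ cosetV Λ := by
  intro w hw l hl γ
  refine Finset.sum_congr rfl fun δ _ => ?_
  rw [mul_assoc, hw l hl (γ * δ)]

/-!
A `Λ`-fixed point of `α_f` is a point of the torus `(ℝ/ℤ)^(Λ\Δ)` killed by the integer
matrix `A` of `ρ_f` on functions on `Λ\Δ`, and `ρ_f|_V` is `A` read over `ℝ`. If `det A ≠ 0`,
the kernel of `A` on the torus is `A⁻¹ℤⁿ / ℤⁿ ≅ ℤⁿ / Aℤⁿ`, of order `|det A|` by the Smith
normal form. And `det A ≠ 0` because a real null vector of `A` gives a bounded function `u`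
on `Δ` with `ρ_f u = 0`, which convolution with the `ℓ¹`-inverse of `f` forces to vanish.
-/

open QuotientGroup Matrix

section TorusKernel

theorem exists_intCast_eq_of_coe_eq_zero {ι : Type*} {r : ι → ℝ}
    (hr : ∀ i, (r i : T1) = 0) : ∃ n : ι → ℤ, (fun i => (n i : ℝ)) = r := by
  choose n hn using fun i => (AddCircle.coe_eq_zero_iff (1 : ℝ)).mp (hr i)
  exact ⟨n, funext fun i => by simpa using hn i⟩

variable {Q : Type*} [Fintype Q]

theorem natCard_quotient_range_mulVecLin [DecidableEq Q] {A : Matrix Q Q ℤ} (hA : A.det ≠ 0) :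
    Nat.card ((Q → ℤ) ⧸ LinearMap.range A.mulVecLin) = A.det.natAbs := by
  let e := LinearEquiv.ofInjective A.mulVecLin (mulVec_injective_of_det_ne_zero hA)
  rw [← Submodule.natAbs_det_equiv _ e, ← LinearMap.det_toLin']
  rfl

def torusKer (A : Matrix Q Q ℤ) : Set (Q → T1) :=
  {x | ∀ q, ∑ q', A q q' • x q' = 0}

theorem sum_zsmul_coe (A : Matrix Q Q ℤ) (r : Q → ℝ) (q : Q) :
    ∑ q', A q q' • (r q' : T1) = ((A.map (Int.cast : ℤ → ℝ) *ᵥ r) q : T1) := by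
  simp only [mulVec, dotProduct, map_apply, QuotientAddGroup.mk_sum, ← zsmul_eq_mul,
    QuotientAddGroup.mk_zsmul]

theorem natCard_torusKer [DecidableEq Q] {A : Matrix Q Q ℤ} (hA : A.det ≠ 0) :
    Nat.card (torusKer A) = A.det.natAbs := by
  set M := A.map (Int.cast : ℤ → ℝ)
  have hM : IsUnit M.det := by
    rw [← Int.cast_det]
    exact isUnit_iff_ne_zero.mpr (Int.cast_ne_zero.mpr hA)
  -- `n ↦ M⁻¹ n mod ℤ^Q` maps `ℤ^Q` onto `torusKer A` with kernel `A ℤ^Q`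
  let ψ : (Q → ℤ) →+ (Q → T1) :=
    ((QuotientAddGroup.mk' _).compLeft Q).comp
      ((M⁻¹.mulVecLin.toAddMonoidHom).comp ((Int.castAddHom ℝ).compLeft Q))
  have hψ : ∀ n, ψ n = fun q => ((M⁻¹ *ᵥ fun q' => (n q' : ℝ)) q : T1) := fun n => rfl
  have hrange : (ψ.range : Set (Q → T1)) = torusKer A := by
    ext x
    constructor
    · rintro ⟨n, rfl⟩ q
      rw [hψ, sum_zsmul_coe, mulVec_mulVec, mul_nonsing_inv M hM, one_mulVec]
      exact (AddCircle.coe_eq_zero_iff (1 : ℝ)).mpr ⟨n q, by simp⟩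
    · intro hx
      choose r hr using fun q => QuotientAddGroup.mk_surjective (x q)
      have hx' : ∀ q, ((M *ᵥ r) q : T1) = 0 := fun q => by
        rw [← sum_zsmul_coe]; simpa only [hr] using hx q
      obtain ⟨n, hn⟩ := exists_intCast_eq_of_coe_eq_zero hx'
      refine ⟨n, funext fun q => ?_⟩
      rw [hψ, hn, mulVec_mulVec, nonsing_inv_mul M hM, one_mulVec]
      exact hr q
  have hker : ψ.ker = (LinearMap.range A.mulVecLin).toAddSubgroup := by
    have hcast : ∀ m : Q → ℤ, (fun q => ((A *ᵥ m) q : ℝ)) = M *ᵥ fun q => (m q : ℝ) :=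
      fun m => funext fun q => by simp [M, mulVec, dotProduct]
    ext n
    simp only [AddMonoidHom.mem_ker, Submodule.mem_toAddSubgroup, LinearMap.mem_range,
      mulVecLin_apply]
    constructor
    · intro h
      rw [hψ] at h
      obtain ⟨m, hm⟩ := exists_intCast_eq_of_coe_eq_zero (congrFun h)
      refine ⟨m, funext fun q => ?_⟩
      have := congrFun (hcast m) q
      rw [hm, mulVec_mulVec, mul_nonsing_inv M hM, one_mulVec] at this
      exact_mod_cast this
    · rintro ⟨m, rfl⟩
      funext q
      rw [hψ, hcast, mulVec_mulVec, nonsing_inv_mul M hM, one_mulVec]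
      exact (AddCircle.coe_eq_zero_iff (1 : ℝ)).mpr ⟨m q, by simp⟩
  calc Nat.card (torusKer A) = Nat.card ψ.range :=
        Nat.card_congr (Equiv.setCongr hrange.symm)
    _ = Nat.card ((Q → ℤ) ⧸ ψ.ker) :=
      Nat.card_congr (QuotientAddGroup.quotientKerEquivRange ψ).toEquiv.symm
    _ = A.det.natAbs := by rw [hker]; exact natCard_quotient_range_mulVecLin hA

end TorusKernel

theorem summable_mul_of_abs_le {ι : Type*} {a w : ι → ℝ} {C : ℝ} (ha : ∀ i, |a i| ≤ C)
    (hw : Summable fun i => |w i|) : Summable fun i => a i * w i :=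
  (hw.mul_left C).of_norm_bounded fun i => by
    rw [Real.norm_eq_abs, abs_mul]
    exact mul_le_mul_of_nonneg_right (ha i) (abs_nonneg _)

/-- `u = ρ_{w·f} u = ρ_w (ρ_f u)`; the exchange of summations is justified by boundedness. -/
theorem eq_zero_of_rhoLin_eq_zero {Δ : Type*} [Group Δ] [DecidableEq Δ]
    {f : MonoidAlgebra ℤ Δ} {w : Δ → ℝ} (hw : Summable fun δ => |w δ|)
    (hwf : ∀ γ, ∑ δ ∈ f.coeff.support, w (γ * δ⁻¹) * (f.coeff δ : ℝ) =
      if γ = 1 then 1 else 0)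
    {u : Δ → ℝ} {C : ℝ} (hC : ∀ γ, |u γ| ≤ C) (hu : rhoLin f u = 0) : u = 0 := by
  funext γ
  have hsum (δ : Δ) (a : Δ → Δ) : Summable fun ζ => u (a ζ) * w (ζ * δ) :=
    summable_mul_of_abs_le (fun ζ => hC _) (hw.comp_injective (mul_left_injective δ))
  calc u γ = ∑' ζ, ∑ δ ∈ f.coeff.support, u (γ * ζ) * w (ζ * δ⁻¹) * f.coeff δ := by
        simp_rw [mul_assoc, ← Finset.mul_sum, hwf, mul_ite, mul_one, mul_zero]
        rw [tsum_ite_eq, mul_one]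
    _ = ∑ δ ∈ f.coeff.support, ∑' ξ, u (γ * ξ * δ) * w ξ * f.coeff δ := by
        rw [Summable.tsum_finsetSum fun δ _ => (hsum δ⁻¹ _).mul_right _]
        refine Finset.sum_congr rfl fun δ _ => ?_
        rw [← (Equiv.mulRight δ).tsum_eq]
        simp [mul_assoc]
    _ = ∑' ξ, w ξ * rhoLin f u (γ * ξ) := by
        rw [← Summable.tsum_finsetSum fun δ _ => ?_]
        · refine tsum_congr fun ξ => ?_
          simp only [rhoLin, LinearMap.coe_mk, AddHom.coe_mk, Finset.mul_sum]
          exact Finset.sum_congr rfl fun δ _ => by ring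
        · simpa [mul_assoc] using (hsum 1 (fun ξ => γ * (ξ * δ))).mul_right (f.coeff δ : ℝ)
    _ = 0 := by simp [hu]

section Cosets

variable {Δ : Type*} [Group Δ]

instance finite_quotient_rightRel (Λ : Subgroup Δ) [Λ.FiniteIndex] :
    Finite (Quotient (rightRel Λ)) :=
  Finite.of_equiv _ (quotientRightRelEquivQuotientLeftRel Λ).symm

variable {Λ : Subgroup Δ}

theorem mk_mul_left_of_mem {l : Δ} (hl : l ∈ Λ) (γ : Δ) :
    (Quotient.mk'' (l * γ) : Quotient (rightRel Λ)) = Quotient.mk'' γ :=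
  Quotient.sound' (rightRel_apply.mpr (by simpa using Λ.inv_mem hl))

theorem mk_mul_right {θ₁ θ₂ : Δ} (h : rightRel Λ θ₁ θ₂) (δ : Δ) :
    (Quotient.mk'' (θ₁ * δ) : Quotient (rightRel Λ)) = Quotient.mk'' (θ₂ * δ) :=
  Quotient.sound' (rightRel_apply.mpr (by simpa [mul_assoc] using rightRel_apply.mp h))

/-- The matrix of `ρ_f` on functions on `Λ\Δ`: the entry at `(Λθ, q)` is the sum of the `f(δ)`
with `Λθδ = q`. -/
noncomputable def cosetMatrix (f : MonoidAlgebra ℤ Δ) (Λ : Subgroup Δ) :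
    Matrix (Quotient (rightRel Λ)) (Quotient (rightRel Λ)) ℤ := fun q =>
  Quotient.liftOn q
    (fun θ => ⇑(f.coeff.mapDomain fun δ => (Quotient.mk'' (θ * δ) : Quotient (rightRel Λ))))
    fun _ _ h => congrArg (fun g => ⇑(f.coeff.mapDomain g)) (funext (mk_mul_right h))

variable [Fintype (Quotient (rightRel Λ))]

theorem sum_cosetMatrix_smul {M : Type*} [AddCommGroup M] (f : MonoidAlgebra ℤ Δ)
    (x : Quotient (rightRel Λ) → M) (θ : Δ) :
    ∑ q, cosetMatrix f Λ (Quotient.mk'' θ) q • x q =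
      ∑ δ ∈ f.coeff.support, f.coeff δ • x (Quotient.mk'' (θ * δ)) := by
  change ∑ q, (f.coeff.mapDomain fun δ => (Quotient.mk'' (θ * δ) : Quotient (rightRel Λ))) q
    • x q = _
  rw [← Finsupp.sum_fintype _ (fun q n => n • x q) (fun _ => zero_smul _ _),
    Finsupp.sum_mapDomain_index (h := fun q n => n • x q) (fun _ => zero_smul _ _)
      (fun _ _ _ => add_smul _ _ _)]
  rfl

theorem mulVec_cosetMatrix_apply (f : MonoidAlgebra ℤ Δ) (v : Quotient (rightRel Λ) → ℝ)
    (θ : Δ) :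
    ((cosetMatrix f Λ).map (Int.cast : ℤ → ℝ) *ᵥ v) (Quotient.mk'' θ) =
      rhoLin f (fun γ => v (Quotient.mk'' γ)) θ := by
  simp only [mulVec, dotProduct, map_apply, ← zsmul_eq_mul, sum_cosetMatrix_smul]
  simp [rhoLin, zsmul_eq_mul, mul_comm]

noncomputable def cosetVEquiv (Λ : Subgroup Δ) :
    (Quotient (rightRel Λ) → ℝ) ≃ₗ[ℝ] cosetV Λ where
  toFun v :=
    ⟨fun γ => v (Quotient.mk'' γ), fun _ hl γ => congrArg v (mk_mul_left_of_mem hl γ)⟩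
  map_add' _ _ := rfl
  map_smul' _ _ := rfl
  invFun w q := Quotient.liftOn q w fun θ₁ θ₂ h => by
    simpa using (w.2 _ (rightRel_apply.mp h) θ₁).symm
  left_inv v := funext fun q => Quotient.inductionOn q fun _ => rfl
  right_inv _ := rfl

theorem det_rhoLin_restrict [DecidableEq (Quotient (rightRel Λ))] (f : MonoidAlgebra ℤ Δ) :
    LinearMap.det ((rhoLin f).restrict (rhoLin_mapsTo f Λ)) = ((cosetMatrix f Λ).det : ℝ) := by
  have hconj : (rhoLin f).restrict (rhoLin_mapsTo f Λ) =
      (cosetVEquiv Λ : _ →ₗ[ℝ] _) ∘ₗ toLin' ((cosetMatrix f Λ).map Int.cast) ∘ₗ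
        ((cosetVEquiv Λ).symm : _ →ₗ[ℝ] _) := by
    ext w : 1
    obtain ⟨v, rfl⟩ := (cosetVEquiv Λ).surjective w
    refine Subtype.ext (funext fun θ => ?_)
    simp only [LinearMap.comp_apply, LinearEquiv.coe_coe, LinearEquiv.symm_apply_apply,
      toLin'_apply]
    exact (mulVec_cosetMatrix_apply f v θ).symm
  rw [hconj, LinearMap.det_conj, LinearMap.det_toLin', Int.cast_det]

theorem det_cosetMatrix_ne_zero [DecidableEq Δ] [DecidableEq (Quotient (rightRel Λ))]
    {f : MonoidAlgebra ℤ Δ} (hf : L1Invertible f) : (cosetMatrix f Λ).det ≠ 0 := by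
  obtain ⟨w, hw, -, hwf⟩ := hf
  intro h0
  have hdet : ((cosetMatrix f Λ).map (Int.cast : ℤ → ℝ)).det = 0 := by
    rw [← Int.cast_det, h0, Int.cast_zero]
  obtain ⟨v, hv0, hv⟩ := exists_mulVec_eq_zero_iff.mpr hdet
  have hρ : rhoLin f (fun γ => v (Quotient.mk'' γ)) = 0 :=
    funext fun θ => by rw [← mulVec_cosetMatrix_apply, hv]; rfl
  have hbdd (γ : Δ) : |v (Quotient.mk'' γ)| ≤ ∑ q, |v q| :=
    Finset.single_le_sum (f := fun q => |v q|) (fun q _ => abs_nonneg (v q)) (Finset.mem_univ _)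
  have hu := eq_zero_of_rhoLin_eq_zero hw hwf hbdd hρ
  exact hv0 (funext fun q => Quotient.inductionOn q fun θ => congrFun hu θ)

noncomputable def fixedPointsEquivTorusKer (f : MonoidAlgebra ℤ Δ) (Λ : Subgroup Δ)
    [Fintype (Quotient (rightRel Λ))] :
    {t : ↥(Xf f) | ∀ l ∈ Λ, ∀ γ : Δ, (t : Δ → T1) (l⁻¹ * γ) = (t : Δ → T1) γ} ≃
      torusKer (cosetMatrix f Λ) where
  toFun t := ⟨fun q => Quotient.liftOn q (t : Δ → T1) fun θ₁ θ₂ h => by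
      simpa using t.2 _ (rightRel_apply.mp h) θ₂,
    fun q => Quotient.inductionOn q fun θ => by rw [sum_cosetMatrix_smul]; exact t.1.2 θ⟩
  invFun x := ⟨⟨fun γ => x.1 (Quotient.mk'' γ), fun θ => by
      rw [← sum_cosetMatrix_smul]; exact x.2 _⟩,
    fun _ hl γ => congrArg x.1 (mk_mul_left_of_mem (Λ.inv_mem hl) γ)⟩
  left_inv _ := rfl
  right_inv x := Subtype.ext (funext fun q => Quotient.inductionOn q fun _ => rfl)

end Cosets

theorem card_fixed_points_eq_abs_det_general
    {Δ : Type*} [Group Δ] [DecidableEq Δ]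
    (f : MonoidAlgebra ℤ Δ) (hf : L1Invertible f)
    (Λ : Subgroup Δ) [Λ.FiniteIndex] :
    {t : ↥(Xf f) | ∀ l ∈ Λ, ∀ γ : Δ,
        (t : Δ → T1) (l⁻¹ * γ) = (t : Δ → T1) γ}.Finite ∧
      (Nat.card {t : ↥(Xf f) | ∀ l ∈ Λ, ∀ γ : Δ,
          (t : Δ → T1) (l⁻¹ * γ) = (t : Δ → T1) γ} : ℝ) =
        |LinearMap.det ((rhoLin f).restrict (rhoLin_mapsTo f Λ))| := by
  classical
  have := Fintype.ofFinite (Quotient (rightRel Λ))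
  have hdet := det_cosetMatrix_ne_zero (Λ := Λ) hf
  have hcard := (Nat.card_congr (fixedPointsEquivTorusKer f Λ)).trans (natCard_torusKer hdet)
  refine ⟨Set.finite_coe_iff.mp (Nat.finite_of_card_ne_zero ?_), ?_⟩
  · rwa [hcard, Int.natAbs_ne_zero]
  · rw [hcard, det_rhoLin_restrict, Nat.cast_natAbs, Int.cast_abs]

/-- For `f ∈ ℤΔ` invertible in `ℓ¹(Δ,ℝ)` and a finite-index subgroup
`Λ ≤ Δ`, the set of `Λ`-fixed points of `α_f` is finite, of cardinality
`|det(ρ_f|_V)|` where `V` is the space of functions constant on right cosets of `Λ`. -/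
theorem card_fixed_points_eq_abs_det
    {Δ : Type*} [Group Δ] [Countable Δ] [DecidableEq Δ]
    (f : MonoidAlgebra ℤ Δ) (hf : L1Invertible f)
    (Λ : Subgroup Δ) [Λ.FiniteIndex] :
    {t : ↥(Xf f) | ∀ l ∈ Λ, ∀ γ : Δ,
        (t : Δ → T1) (l⁻¹ * γ) = (t : Δ → T1) γ}.Finite ∧
      (Nat.card {t : ↥(Xf f) | ∀ l ∈ Λ, ∀ γ : Δ,
          (t : Δ → T1) (l⁻¹ * γ) = (t : Δ → T1) γ} : ℝ) =
        |LinearMap.det ((rhoLin f).restrict (rhoLin_mapsTo f Λ))| :=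
  card_fixed_points_eq_abs_det_general f hf Λ
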